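/- Let (X, d) be a metric space and r : X → ℝ a function with r x > 0 for all x ∈ X. Let K > 0 and δ ∈ (0, 1]. Suppose p, p' ∈ X satisfy d(p', p) ≤ K · r(p) and r(p') < δ · r(p), and suppose there is a constant c > 0 such that r x ≥ c for every x ∈ Metric.ball p (3 · K · r(p)). Then there exists a point q ∈ Metric.ball p (3 · K · r(p)) such that: (i) r(q) < δ · r(p); (ii) Metric.ball q (δ⁻¹ · K · r(q)) ⊆ Metric.ball p (3 · K · r(p)); and (iii) r x ≥ r(q) / 2 for every x ∈ Metric.ball q (δ⁻¹ · K · r(q)). -/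

import Mathlib

/-! The invariant `dist q p + 2 δ⁻¹ K r q < 3 K r p`, `r q < δ r p` holds at `p'`, puts the ball
of radius `δ⁻¹ K r q` about `q` inside the big ball, and survives replacing `q` by a point of that
ball where `r` has at least halved. Since `r ≥ c > 0` on the big ball, halving cannot go on forever,
so some point satisfying the invariant admits no such replacement. -/

open Metric

theorem exists_of_halving_descent {α : Type*} {P Q : α → Prop} {r : α → ℝ} {c : ℝ} (hc : 0 < c)
    (hlow : ∀ x, P x → c ≤ r x) (hstep : ∀ x, P x → ¬ Q x → ∃ y, P y ∧ r y ≤ r x / 2)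
    {x₀ : α} (hx₀ : P x₀) : ∃ x, P x ∧ Q x := by
  by_contra! hbad
  have hhalve : ∀ n : ℕ, ∃ x, P x ∧ r x ≤ r x₀ / 2 ^ n := by
    intro n
    induction n with
    | zero => exact ⟨x₀, hx₀, by simp⟩
    | succ n ih =>
      obtain ⟨x, hx, hxn⟩ := ih
      obtain ⟨y, hy, hyx⟩ := hstep x hx (hbad x hx)
      refine ⟨y, hy, hyx.trans ?_⟩
      rw [pow_succ, ← div_div]
      linarith
  obtain ⟨n, hn⟩ := pow_unbounded_of_one_lt (r x₀ / c) one_lt_two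
  obtain ⟨x, hx, hxn⟩ := hhalve n
  have hbelow : r x₀ / 2 ^ n < c := by
    rw [div_lt_iff₀ hc] at hn
    rw [div_lt_iff₀ (by positivity)]
    linarith
  linarith [hlow x hx, hbelow]

theorem dist_add_two_mul_lt_of_dist_lt {X : Type*} [PseudoMetricSpace X] {p q x : X}
    {ρ a b R : ℝ} (hρ : 0 ≤ ρ) (hq : dist q p + 2 * (ρ * a) < R) (hx : dist x q < ρ * a)
    (hb : b ≤ a / 2) : dist x p + 2 * (ρ * b) < R := by
  have hρb : 2 * (ρ * b) ≤ ρ * a := by nlinarith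
  linarith [dist_triangle x q p]

theorem point_reselection_general {X : Type*} [MetricSpace X] (r : X → ℝ)
    (hr : ∀ x : X, 0 < r x) (K δ : ℝ) (hK : 0 < K) (hδ0 : 0 < δ)
    (p p' : X) (hd : dist p' p ≤ K * r p) (hsmall : r p' < δ * r p)
    (c : ℝ) (hc : 0 < c) (hlow : ∀ x ∈ Metric.ball p (3 * K * r p), c ≤ r x) :
    ∃ q ∈ Metric.ball p (3 * K * r p),
      r q < δ * r p ∧
      Metric.ball q (δ⁻¹ * K * r q) ⊆ Metric.ball p (3 * K * r p) ∧
      ∀ x ∈ Metric.ball q (δ⁻¹ * K * r q), r q / 2 ≤ r x := by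
  set ρ := δ⁻¹ * K
  have hρ : 0 < ρ := by positivity
  set P : X → Prop := fun q ↦ dist q p + 2 * (ρ * r q) < 3 * K * r p ∧ r q < δ * r p
  have hsub : ∀ q, P q → ball q (ρ * r q) ⊆ ball p (3 * K * r p) := fun q hq ↦
    ball_subset_ball' (by linarith [hq.1, mul_pos hρ (hr q)])
  have hcenter : ∀ q, q ∈ ball q (ρ * r q) := fun q ↦ mem_ball_self (mul_pos hρ (hr q))
  have hP' : P p' := by
    have : ρ * r p' < K * r p := by
      have : δ⁻¹ * r p' < r p := by rwa [inv_mul_lt_iff₀ hδ0]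
      calc ρ * r p' = K * (δ⁻¹ * r p') := by ring
        _ < K * r p := mul_lt_mul_of_pos_left this hK
    exact ⟨by linarith, hsmall⟩
  have hstep : ∀ q, P q → ¬ (∀ x ∈ ball q (ρ * r q), r q / 2 ≤ r x) →
      ∃ x, P x ∧ r x ≤ r q / 2 := by
    intro q hq hbad
    obtain ⟨x, hx, hxq⟩ := not_forall₂.mp hbad
    rw [not_le] at hxq
    exact ⟨x, ⟨dist_add_two_mul_lt_of_dist_lt hρ.le hq.1 hx hxq.le,
      by linarith [hq.2, hr q]⟩, hxq.le⟩
  obtain ⟨q, hq, hgood⟩ := exists_of_halving_descent hc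
    (fun q hq ↦ hlow q (hsub q hq (hcenter q))) hstep hP'
  exact ⟨q, hsub q hq (hcenter q), hq.2, hsub q hq, hgood⟩

/-- Point reselection (Section 3.2 of the paper): given a strictly positive function `r`
bounded below on a large ball about `p`, and a point `p'` near `p` where `r` is small,
there is a point `q` where `r` is still small, and which is "almost minimal": `r ≥ r q / 2`
on the ball of radius `δ⁻¹ K r q` about `q`, which moreover stays inside the big ball. -/
theorem point_reselection {X : Type*} [MetricSpace X] (r : X → ℝ)
    (hr : ∀ x : X, 0 < r x) (K δ : ℝ) (hK : 0 < K) (hδ0 : 0 < δ) (hδ1 : δ ≤ 1)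
    (p p' : X) (hd : dist p' p ≤ K * r p) (hsmall : r p' < δ * r p)
    (c : ℝ) (hc : 0 < c) (hlow : ∀ x ∈ Metric.ball p (3 * K * r p), c ≤ r x) :
    ∃ q ∈ Metric.ball p (3 * K * r p),
      r q < δ * r p ∧
      Metric.ball q (δ⁻¹ * K * r q) ⊆ Metric.ball p (3 * K * r p) ∧
      ∀ x ∈ Metric.ball q (δ⁻¹ * K * r q), r q / 2 ≤ r x :=
  point_reselection_general r hr K δ hK hδ0 p p' hd hsmall c hc hlow
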